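/- Fix N ≥ 1, let x_1 < ⋯ < x_N be the roots of H_N, let (Q_m)_{0 ≤ m ≤ N−1} be a dual Hermite family for H_N, and fix 0 ≤ m ≤ N − 1. Then for every 1 ≤ i ≤ N: (m/2)·Q_m(x_i) = Σ_{j ≠ i} ( Q_m(x_i) − Q_m(x_j) ) / (x_i − x_j)². -/

import Mathlib

noncomputable def hermiteR (k : ℕ) : Polynomial ℝ :=
  (Polynomial.hermite k).map (Int.castRingHom ℝ)

/-- A dual Hermite family for `H_k`: real polynomials `Q_0, …, Q_{k-1}` with `Q_m` monic of
degree `m`, orthogonal for the counting measure on the `k` distinct real roots of `H_k`. -/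
def IsDualHermiteFamily (k : ℕ) (Q : ℕ → Polynomial ℝ) : Prop :=
  (∀ m < k, (Q m).Monic ∧ (Q m).natDegree = m) ∧
  ∀ m < k, ∀ n < k, m ≠ n →
    ((hermiteR k).roots.map (fun x => (Q m).eval x * (Q n).eval x)).sum = 0

/-!
The roots of `H_N` are real and simple: `H_{n+1} = X H_n - H_n'` takes alternating signs at the
roots of `H_n` and at `±v` for large `v`, so its roots interlace those of `H_n`. At a root `a`, the
equation `H'' = X H' - N H` gives `H''(a) = a H'(a)`, i.e. the Stieltjes relations
`∑_{b ≠ a} 1 / (a - b) = a / 2`. With these, the operator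
`L f (a) = ∑_{b ≠ a} (f a - f b) / (a - b)²` sends a polynomial of degree `≤ n` to `n / 2` times
itself plus a polynomial of degree `< n` (on the roots), and `L` is symmetric for the counting
measure on the roots. So `L Q_m - (m / 2) Q_m` has degree `< m` and is orthogonal to all `Q_k`,
`k < m`, hence to itself: it vanishes on the roots.
-/

open Polynomial Finset

namespace Polynomial

theorem X_mul_mem_degreeLT {R : Type*} [Semiring R] [Nontrivial R] {g : R[X]} {n : ℕ}
    (hg : g ∈ degreeLT R n) : X * g ∈ degreeLT R (n + 1) := by
  rw [mem_degreeLT] at *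
  rw [X_mul, degree_mul_X]
  push_cast
  exact WithBot.add_lt_add_right (by simp) hg

theorem mem_degreeLT_succ_of_natDegree_le {R : Type*} [Semiring R] {p : R[X]} {n : ℕ}
    (h : p.natDegree ≤ n) : p ∈ degreeLT R (n + 1) := by
  rw [degreeLT_succ_eq_degreeLE, mem_degreeLE]
  exact natDegree_le_iff_degree_le.mp h

theorem eval_eq_mul_eval_divX_add {R : Type*} [CommSemiring R] (p : R[X]) (t : R) :
    p.eval t = t * p.divX.eval t + p.coeff 0 := by
  conv_lhs => rw [← X_mul_divX_add p]
  rw [eval_add, eval_mul, eval_X, eval_C]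

theorem natDegree_divX_le_of_le {R : Type*} [Semiring R] {p : R[X]} {n : ℕ}
    (hp : p.natDegree ≤ n + 1) : p.divX.natDegree ≤ n := by
  rw [natDegree_divX_eq_natDegree_tsub_one]
  omega

section Roots

variable {R : Type*} [CommRing R] [IsDomain R] [DecidableEq R] {p : R[X]}

theorem card_roots_eq_natDegree_of_card_toFinset (h : #p.roots.toFinset = p.natDegree) :
    Multiset.card p.roots = p.natDegree :=
  le_antisymm (card_roots' p) (h ▸ Multiset.toFinset_card_le _)

theorem nodup_roots_of_card_toFinset (h : #p.roots.toFinset = p.natDegree) : p.roots.Nodup :=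
  Multiset.toFinset_card_eq_card_iff_nodup.mp
    (h.trans (card_roots_eq_natDegree_of_card_toFinset h).symm)

theorem prod_X_sub_C_roots_toFinset (hp : p.Monic) (h : #p.roots.toFinset = p.natDegree) :
    ∏ a ∈ p.roots.toFinset, (X - C a) = p := by
  rw [prod_eq_multiset_prod, Multiset.toFinset_val, (nodup_roots_of_card_toFinset h).dedup]
  exact prod_multiset_X_sub_C_of_monic_of_roots_card_eq hp
    (card_roots_eq_natDegree_of_card_toFinset h)

end Roots

theorem eval_derivative_prod_X_sub_C_of_notMem {K : Type*} [Field K] [DecidableEq K]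
    {s : Finset K} {x : K} (hx : x ∉ s) :
    (derivative (∏ b ∈ s, (X - C b))).eval x = (∏ b ∈ s, (x - b)) * ∑ b ∈ s, (x - b)⁻¹ := by
  rw [derivative_prod_finset, eval_finsetSum, mul_sum]
  refine sum_congr rfl fun b hb => ?_
  have hxb : x - b ≠ 0 := sub_ne_zero.mpr fun h => hx (h ▸ hb)
  rw [derivative_X_sub_C, mul_one, eval_prod, ← mul_prod_erase s (fun c => x - c) hb]
  simp only [eval_sub, eval_X, eval_C]
  field_simp

theorem pos_neg_one_pow_mul_eval_derivative_prod_X_sub_C {S : Finset ℝ} {a : ℝ} (ha : a ∈ S) :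
    0 < (-1) ^ #{b ∈ S | a < b} * (derivative (∏ b ∈ S, (X - C b))).eval a := by
  have hprod : (derivative (∏ b ∈ S, (X - C b))).eval a = ∏ b ∈ S.erase a, (a - b) := by
    rw [prod_eq_multiset_prod, eval_multiset_prod_X_sub_C_derivative ha, ← erase_val]
    rfl
  have hfilter : {b ∈ S | a < b} = {b ∈ S.erase a | a < b} := by
    ext b
    simp only [mem_filter, mem_erase]
    constructor
    · rintro ⟨hb, hab⟩
      exact ⟨⟨hab.ne', hb⟩, hab⟩
    · rintro ⟨⟨_, hb⟩, hab⟩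
      exact ⟨hb, hab⟩
  have hsign : (-1 : ℝ) ^ #{b ∈ S.erase a | a < b} =
      ∏ b ∈ S.erase a, if a < b then -1 else 1 := by
    rw [prod_ite, prod_const, prod_const_one, mul_one]
  rw [hprod, hfilter, hsign, ← prod_mul_distrib]
  refine prod_pos fun b hb => ?_
  have hba := (mem_erase.mp hb).1
  split_ifs with h
  · linarith
  · linarith [lt_of_le_of_ne (not_lt.mp h) hba]

/-- Alternating signs along `T` force a root between any two consecutive points of `T`. -/
theorem card_le_card_roots_toFinset_add_one_of_alternating {p : ℝ[X]} {T : Finset ℝ}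
    (hT : ∀ t ∈ T, 0 < (-1) ^ #{s ∈ T | t < s} * p.eval t) :
    #T ≤ #p.roots.toFinset + 1 := by
  refine card_le_of_interleaved fun x hx y hy hxy hgap => ?_
  have hsplit : {s ∈ T | x < s} = insert y {s ∈ T | y < s} := by
    ext s
    simp only [mem_filter, mem_insert]
    constructor
    · rintro ⟨hs, hxs⟩
      rcases lt_trichotomy y s with h | h | h
      · exact Or.inr ⟨hs, h⟩
      · exact Or.inl h.symm
      · exact absurd ⟨hxs, h⟩ (hgap s hs)
    · rintro (rfl | ⟨hs, hys⟩)
      exacts [⟨hy, hxy⟩, ⟨hs, hxy.trans hys⟩]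
  have hsign : p.eval x * p.eval y < 0 := by
    have hx' := hT x hx
    have hy' := hT y hy
    rw [hsplit, card_insert_of_notMem (by simp), pow_succ] at hx'
    have hsq : ((-1 : ℝ) ^ #{s ∈ T | y < s}) ^ 2 = 1 := by
      rw [← pow_mul, mul_comm, pow_mul, neg_one_sq, one_pow]
    nlinarith [mul_pos hx' hy']
  have hp : p ≠ 0 := by
    rintro rfl
    simp at hsign
  obtain ⟨z, hz, hz0⟩ : ∃ z ∈ Set.Icc x y, p.eval z = 0 := by
    have h0 : (0 : ℝ) ∈ Set.uIcc (p.eval x) (p.eval y) := by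
      rcases lt_or_ge (p.eval x) 0 with h | h
      · exact Set.mem_uIcc.mpr (Or.inl ⟨h.le, by nlinarith⟩)
      · exact Set.mem_uIcc.mpr (Or.inr ⟨by nlinarith, h⟩)
    simpa [Set.uIcc_of_le hxy.le] using intermediate_value_uIcc p.continuous.continuousOn h0
  refine ⟨z, by simpa [hp] using hz0, ?_, ?_⟩
  · exact hz.1.lt_of_ne (by rintro rfl; simp [hz0] at hsign)
  · exact hz.2.lt_of_ne (by rintro rfl; simp [hz0] at hsign)

theorem derivative_hermite_succ (n : ℕ) :
    derivative (hermite (n + 1)) = (n + 1 : ℤ[X]) * hermite n := by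
  induction n with
  | zero => simp
  | succ n ih =>
    rw [hermite_succ (n + 1), derivative_sub, derivative_mul, derivative_X, ih, derivative_mul]
    simp only [derivative_add, derivative_natCast, derivative_one, add_zero, zero_mul, zero_add,
      Nat.cast_add, Nat.cast_one]
    linear_combination (-(n + 1) : ℤ[X]) * hermite_succ n

end Polynomial

theorem hermiteR_monic (n : ℕ) : (hermiteR n).Monic :=
  (hermite_monic n).map _

theorem natDegree_hermiteR (n : ℕ) : (hermiteR n).natDegree = n := by
  rw [hermiteR, (hermite_monic n).natDegree_map, natDegree_hermite]

theorem hermiteR_succ (n : ℕ) :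
    hermiteR (n + 1) = X * hermiteR n - derivative (hermiteR n) := by
  rw [hermiteR, hermite_succ, Polynomial.map_sub, Polynomial.map_mul, Polynomial.map_X,
    ← derivative_map, hermiteR]

theorem derivative_hermiteR_succ (n : ℕ) :
    derivative (hermiteR (n + 1)) = (n + 1 : ℝ[X]) * hermiteR n := by
  rw [hermiteR, derivative_map, derivative_hermite_succ, Polynomial.map_mul, hermiteR]
  simp

theorem derivative_derivative_hermiteR (n : ℕ) :
    derivative (derivative (hermiteR n)) =
      X * derivative (hermiteR n) - (n : ℝ[X]) * hermiteR n := by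
  cases n with
  | zero => simp [hermiteR]
  | succ n =>
    rw [derivative_hermiteR_succ, derivative_mul]
    simp only [derivative_add, derivative_natCast, derivative_one, add_zero, zero_mul, zero_add,
      Nat.cast_add, Nat.cast_one]
    linear_combination (n + 1 : ℝ[X]) * hermiteR_succ n

theorem eval_neg_hermiteR (n : ℕ) (x : ℝ) :
    (hermiteR n).eval (-x) = (-1) ^ n * (hermiteR n).eval x := by
  simp only [hermiteR, eval_map, eval₂_eq_sum_range, natDegree_hermite, mul_sum]
  refine sum_congr rfl fun k _ => ?_
  rcases Nat.even_or_odd (n + k) with h | h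
  · rw [neg_pow, neg_one_pow_congr (Nat.even_add.mp h).symm]
    ring
  · simp [coeff_hermite_of_odd_add h]

theorem exists_bound_eval_hermiteR_succ_pos (n : ℕ) (S : Finset ℝ) :
    ∃ v, (∀ a ∈ S, |a| < v) ∧ 0 < v ∧ 0 < (hermiteR (n + 1)).eval v := by
  have htendsto := (hermiteR (n + 1)).tendsto_atTop_of_leadingCoeff_nonneg
    (by rw [degree_eq_natDegree (hermiteR_monic _).ne_zero, natDegree_hermiteR]
        exact_mod_cast n.succ_pos)
    (by rw [(hermiteR_monic _).leadingCoeff]; exact zero_le_one)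
  exact (((Filter.eventually_all_finset S).2 fun a _ => Filter.eventually_gt_atTop |a|).and
    ((Filter.eventually_gt_atTop 0).and (htendsto.eventually_gt_atTop 0))).exists

theorem card_roots_toFinset_hermiteR_succ {n : ℕ} (ih : #(hermiteR n).roots.toFinset = n) :
    #(hermiteR (n + 1)).roots.toFinset = n + 1 := by
  set S := (hermiteR n).roots.toFinset
  have hroot : ∀ a ∈ S, (hermiteR n).eval a = 0 := fun a ha =>
    (mem_roots (hermiteR_monic n).ne_zero).mp (Multiset.mem_toFinset.mp ha)
  have hprod :=
    prod_X_sub_C_roots_toFinset (hermiteR_monic n) (ih.trans (natDegree_hermiteR n).symm)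
  obtain ⟨v, hvS, hv0, hvpos⟩ := exists_bound_eval_hermiteR_succ_pos n S
  have hvS' : ∀ a ∈ S, -v < a ∧ a < v := fun a ha => abs_lt.mp (hvS a ha)
  have hv : v ∉ S := fun h => (hvS' v h).2.false
  have hnv : -v ∉ insert v S := by
    simp only [mem_insert, not_or]
    exact ⟨by linarith, fun h => (hvS' _ h).1.false⟩
  set T := insert (-v) (insert v S)
  have halt : ∀ t ∈ T, 0 < (-1) ^ #{s ∈ T | t < s} * (hermiteR (n + 1)).eval t := by
    intro t ht
    rcases mem_insert.mp ht with rfl | ht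
    · have hT : {s ∈ T | -v < s} = insert v S := by
        ext s; simp only [T, mem_filter, mem_insert]; grind
      rw [hT, card_insert_of_notMem hv, ih, eval_neg_hermiteR, ← mul_assoc, ← mul_pow]
      simpa using hvpos
    rcases mem_insert.mp ht with rfl | ha
    · have hT : {s ∈ T | t < s} = ∅ := by
        ext s; simp only [T, mem_filter, mem_insert]; grind
      simpa [hT] using hvpos
    · have hT : {s ∈ T | t < s} = insert v {s ∈ S | t < s} := by
        ext s; simp only [T, mem_filter, mem_insert]; grind
      rw [hT, card_insert_of_notMem (by simp [hv]), pow_succ, hermiteR_succ, eval_sub, eval_mul,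
        eval_X, hroot t ha, ← hprod]
      linarith [pos_neg_one_pow_mul_eval_derivative_prod_X_sub_C ha]
  have hle : #(hermiteR (n + 1)).roots.toFinset ≤ n + 1 :=
    (Multiset.toFinset_card_le _).trans ((card_roots' _).trans (natDegree_hermiteR _).le)
  have hT : #T = n + 2 := by rw [card_insert_of_notMem hnv, card_insert_of_notMem hv, ih]
  have := card_le_card_roots_toFinset_add_one_of_alternating halt
  omega

theorem card_roots_toFinset_hermiteR (n : ℕ) : #(hermiteR n).roots.toFinset = n := by
  induction n with
  | zero => simp [hermiteR]
  | succ n ih => exact card_roots_toFinset_hermiteR_succ ih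

theorem card_roots_toFinset_hermiteR_eq_natDegree (n : ℕ) :
    #(hermiteR n).roots.toFinset = (hermiteR n).natDegree :=
  (card_roots_toFinset_hermiteR n).trans (natDegree_hermiteR n).symm

theorem sum_inv_sub_roots_hermiteR {n : ℕ} {a : ℝ} (ha : a ∈ (hermiteR n).roots.toFinset) :
    ∑ b ∈ (hermiteR n).roots.toFinset.erase a, (a - b)⁻¹ = 2⁻¹ * a := by
  set S := (hermiteR n).roots.toFinset
  set q := ∏ b ∈ S.erase a, (X - C b)
  have hfac : hermiteR n = (X - C a) * q := by
    rw [mul_prod_erase S (fun b => X - C b) ha,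
      prod_X_sub_C_roots_toFinset (hermiteR_monic n) (card_roots_toFinset_hermiteR_eq_natDegree n)]
  have hqa : q.eval a = ∏ b ∈ S.erase a, (a - b) := by simp [q, eval_prod]
  have hq : ∏ b ∈ S.erase a, (a - b) ≠ 0 :=
    prod_ne_zero_iff.mpr fun b hb => sub_ne_zero.mpr (ne_of_mem_erase hb).symm
  -- with `H = (X - a) q`, the equation `H'' = X H' - n H` at `a` reads `2 q'(a) = a q(a)`
  have hode := congrArg (eval a) (derivative_derivative_hermiteR n)
  rw [hfac] at hode
  simp only [derivative_mul, derivative_add, derivative_sub, derivative_X, derivative_C, sub_zero,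
    one_mul, eval_add, eval_sub, eval_mul, eval_X, eval_C, sub_self, zero_mul, add_zero, mul_zero,
    eval_natCast] at hode
  rw [eval_derivative_prod_X_sub_C_of_notMem (notMem_erase a S), hqa] at hode
  apply mul_left_cancel₀ hq
  linarith

theorem nodup_roots_hermiteR (n : ℕ) : (hermiteR n).roots.Nodup :=
  nodup_roots_of_card_toFinset (card_roots_toFinset_hermiteR_eq_natDegree n)

theorem card_roots_hermiteR (n : ℕ) : Multiset.card (hermiteR n).roots = n :=
  (card_roots_eq_natDegree_of_card_toFinset (card_roots_toFinset_hermiteR_eq_natDegree n)).trans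
    (natDegree_hermiteR n)

noncomputable def divDiffSum (S : Finset ℝ) (f : ℝ → ℝ) (x : ℝ) : ℝ :=
  ∑ y ∈ S.erase x, (f x - f y) / (x - y)

noncomputable def invSqLaplacian (S : Finset ℝ) (f : ℝ → ℝ) (x : ℝ) : ℝ :=
  ∑ y ∈ S.erase x, (f x - f y) / (x - y) ^ 2

section Operators

variable {S : Finset ℝ}

theorem divDiffSum_const (S : Finset ℝ) (c x : ℝ) : divDiffSum S (fun _ => c) x = 0 := by
  simp [divDiffSum]

theorem invSqLaplacian_const (S : Finset ℝ) (c x : ℝ) : invSqLaplacian S (fun _ => c) x = 0 := by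
  simp [invSqLaplacian]

theorem divDiffSum_mul_add {x : ℝ} (hx : x ∈ S) (f : ℝ → ℝ) (c : ℝ) :
    divDiffSum S (fun t => t * f t + c) x = x * divDiffSum S f x + ∑ y ∈ S, f y - f x := by
  rw [divDiffSum, divDiffSum, add_sub_assoc, ← sum_erase_eq_sub hx, mul_sum, ← sum_add_distrib]
  refine sum_congr rfl fun y hy => ?_
  have hxy : x - y ≠ 0 := sub_ne_zero.mpr (ne_of_mem_erase hy).symm
  field_simp
  ring

theorem invSqLaplacian_mul_add {κ x : ℝ} (hx : ∑ y ∈ S.erase x, (x - y)⁻¹ = κ * x)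
    (f : ℝ → ℝ) (c : ℝ) :
    invSqLaplacian S (fun t => t * f t + c) x =
      x * invSqLaplacian S f x + κ * x * f x - divDiffSum S f x := by
  have hκ : κ * x * f x = ∑ y ∈ S.erase x, f x / (x - y) := by
    rw [← hx, sum_mul]
    exact sum_congr rfl fun y _ => (div_eq_inv_mul _ _).symm
  rw [invSqLaplacian, invSqLaplacian, divDiffSum, hκ, mul_sum, ← sum_add_distrib,
    ← sum_sub_distrib]
  refine sum_congr rfl fun y hy => ?_
  have hxy : x - y ≠ 0 := sub_ne_zero.mpr (ne_of_mem_erase hy).symm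
  field_simp
  ring

theorem exists_divDiffSum_eval_eq (S : Finset ℝ) {n : ℕ} {p : ℝ[X]} (hp : p.natDegree ≤ n) :
    ∃ g ∈ degreeLT ℝ n, ∀ x ∈ S, divDiffSum S (fun t => p.eval t) x = g.eval x := by
  induction n generalizing p with
  | zero =>
    refine ⟨0, zero_mem _, fun x _ => ?_⟩
    rw [eq_C_of_natDegree_le_zero hp]
    simpa using divDiffSum_const S _ x
  | succ n ih =>
    obtain ⟨g, hg, hgS⟩ := ih (natDegree_divX_le_of_le hp)
    refine ⟨X * g + C (∑ y ∈ S, p.divX.eval y) - p.divX, ?_, fun x hx => ?_⟩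
    · exact sub_mem (add_mem (X_mul_mem_degreeLT hg)
        (mem_degreeLT_succ_of_natDegree_le ((natDegree_C _).trans_le n.zero_le)))
        (mem_degreeLT_succ_of_natDegree_le (natDegree_divX_le_of_le hp))
    · simp only [eval_eq_mul_eval_divX_add p]
      rw [divDiffSum_mul_add hx, hgS x hx]
      simp only [eval_add, eval_sub, eval_mul, eval_X, eval_C]

theorem exists_invSqLaplacian_eval_eq {κ : ℝ}
    (hS : ∀ x ∈ S, ∑ y ∈ S.erase x, (x - y)⁻¹ = κ * x) {n : ℕ} {p : ℝ[X]} (hp : p.natDegree ≤ n) :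
    ∃ g ∈ degreeLT ℝ n, ∀ x ∈ S,
      invSqLaplacian S (fun t => p.eval t) x = κ * n * p.eval x + g.eval x := by
  induction n generalizing p with
  | zero =>
    refine ⟨0, zero_mem _, fun x _ => ?_⟩
    rw [eq_C_of_natDegree_le_zero hp]
    simpa using invSqLaplacian_const S _ x
  | succ n ih =>
    obtain ⟨g, hg, hgS⟩ := ih (natDegree_divX_le_of_le hp)
    obtain ⟨h, hh, hhS⟩ := exists_divDiffSum_eval_eq S (natDegree_divX_le_of_le hp)
    refine ⟨X * g - h - C (κ * (n + 1) * p.coeff 0), ?_, fun x hx => ?_⟩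
    · exact sub_mem (sub_mem (X_mul_mem_degreeLT hg) (degreeLT_mono n.le_succ hh))
        (mem_degreeLT_succ_of_natDegree_le ((natDegree_C _).trans_le n.zero_le))
    · simp only [eval_eq_mul_eval_divX_add p]
      rw [invSqLaplacian_mul_add (hS x hx), hgS x hx, hhS x hx]
      simp only [eval_sub, eval_mul, eval_X, eval_C]
      push_cast
      ring

theorem sum_invSqLaplacian_mul_comm (S : Finset ℝ) (f g : ℝ → ℝ) :
    ∑ x ∈ S, invSqLaplacian S f x * g x = ∑ x ∈ S, f x * invSqLaplacian S g x := by
  set F : ℝ → ℝ → ℝ := fun x y => (f x * g y - f y * g x) / (x - y) ^ 2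
  have hanti : ∑ x ∈ S, ∑ y ∈ S, F x y = 0 := by
    have hswap : ∑ y ∈ S, ∑ x ∈ S, F x y = -∑ x ∈ S, ∑ y ∈ S, F x y := by
      simp only [F, ← sum_neg_distrib]
      exact sum_congr rfl fun x _ => sum_congr rfl fun y _ => by ring
    linarith [sum_comm (s := S) (t := S) (f := F)]
  rw [← sub_eq_zero, ← hanti, ← sum_sub_distrib]
  refine sum_congr rfl fun x _ => ?_
  -- `F x x = 0 / 0 = 0`, so the diagonal term can be put back
  rw [invSqLaplacian, invSqLaplacian, sum_mul, mul_sum, ← sum_sub_distrib,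
    ← sum_erase S (a := x) (by simp [F])]
  exact sum_congr rfl fun y _ => by ring

theorem sum_eval_mul_eq_zero_of_mem_degreeLT {Q : ℕ → ℝ[X]} {m : ℕ}
    (hQ : ∀ k < m, (Q k).Monic ∧ (Q k).natDegree = k) {u : ℝ → ℝ}
    (hu : ∀ k < m, ∑ x ∈ S, (Q k).eval x * u x = 0) {r : ℝ[X]} (hr : r ∈ degreeLT ℝ m) :
    ∑ x ∈ S, r.eval x * u x = 0 := by
  let P : Sequence ℝ := ⟨fun k => if k < m then Q k else X ^ k, fun k => by
    split_ifs with hk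
    · rw [degree_eq_natDegree (hQ k hk).1.ne_zero, (hQ k hk).2]
    · exact degree_X_pow k⟩
  let φ : ℝ[X] →ₗ[ℝ] ℝ := ∑ x ∈ S, u x • leval x
  have hφ (p : ℝ[X]) : φ p = ∑ x ∈ S, p.eval x * u x := by
    simp [φ, mul_comm]
  have hker : degreeLT ℝ m ≤ LinearMap.ker φ := by
    rw [← P.span_degreeLT fun k hk => by simp [P, hk, (hQ k hk).1.leadingCoeff]]
    refine Submodule.span_le.mpr ?_
    rintro _ ⟨k, hk, rfl⟩
    simpa [hφ, P, Set.mem_Iio.mp hk] using hu k hk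
  simpa [hφ] using hker hr

theorem invSqLaplacian_eval_eq_of_orthogonal {κ : ℝ}
    (hS : ∀ x ∈ S, ∑ y ∈ S.erase x, (x - y)⁻¹ = κ * x) {Q : ℕ → ℝ[X]} {m : ℕ}
    (hQ : ∀ k ≤ m, (Q k).Monic ∧ (Q k).natDegree = k)
    (horth : ∀ k < m, ∑ x ∈ S, (Q k).eval x * (Q m).eval x = 0) :
    ∀ x ∈ S, invSqLaplacian S (fun t => (Q m).eval t) x = κ * m * (Q m).eval x := by
  have hQlt : ∀ k < m, (Q k).Monic ∧ (Q k).natDegree = k := fun k hk => hQ k hk.le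
  obtain ⟨g, hg, hgS⟩ := exists_invSqLaplacian_eval_eq hS (hQ m le_rfl).2.le
  have hg_perp : ∀ k < m, ∑ x ∈ S, (Q k).eval x * g.eval x = 0 := by
    intro k hk
    obtain ⟨gk, hgk, hgkS⟩ := exists_invSqLaplacian_eval_eq hS (hQ k hk.le).2.le
    have hgk_perp := sum_eval_mul_eq_zero_of_mem_degreeLT hQlt horth (degreeLT_mono hk.le hgk)
    have hL : ∑ x ∈ S, invSqLaplacian S (fun t => (Q k).eval t) x * (Q m).eval x =
        κ * k * ∑ x ∈ S, (Q k).eval x * (Q m).eval x + ∑ x ∈ S, gk.eval x * (Q m).eval x := by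
      rw [mul_sum, ← sum_add_distrib]
      exact sum_congr rfl fun x hx => by rw [hgkS x hx]; ring
    have hR : ∑ x ∈ S, (Q k).eval x * invSqLaplacian S (fun t => (Q m).eval t) x =
        κ * m * ∑ x ∈ S, (Q k).eval x * (Q m).eval x + ∑ x ∈ S, (Q k).eval x * g.eval x := by
      rw [mul_sum, ← sum_add_distrib]
      exact sum_congr rfl fun x hx => by rw [hgS x hx]; ring
    have hsym := sum_invSqLaplacian_mul_comm S (fun t => (Q k).eval t) (fun t => (Q m).eval t)
    rw [hL, hR, horth k hk, hgk_perp] at hsym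
    linarith
  have hgg := sum_eval_mul_eq_zero_of_mem_degreeLT hQlt hg_perp hg
  intro x hx
  have hgx : g.eval x = 0 :=
    mul_self_eq_zero.mp ((sum_eq_zero_iff_of_nonneg fun _ _ => mul_self_nonneg _).mp hgg x hx)
  rw [hgS x hx, hgx, add_zero]

end Operators

theorem bijOn_getD_sort {α : Type*} [LinearOrder α] {s : Multiset α} (hs : s.Nodup) (d : α) :
    Set.BijOn (fun i => (s.sort (· ≤ ·)).getD (i - 1) d)
      (Icc 1 (Multiset.card s) : Set ℕ) (s.toFinset : Set α) := by
  set l := s.sort (· ≤ ·)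
  have hlen : l.length = Multiset.card s := Multiset.length_sort _
  have hl : l.Nodup := Multiset.coe_nodup.mp (by rwa [Multiset.sort_eq])
  have hget : ∀ i ∈ (Icc 1 (Multiset.card s) : Set ℕ), ∃ h : i - 1 < l.length,
      l.getD (i - 1) d = l[i - 1] := fun i hi => by
    simp only [coe_Icc, Set.mem_Icc] at hi
    exact ⟨by omega, List.getD_eq_getElem _ _ _⟩
  refine ⟨fun i hi => ?_, fun i hi j hj hij => ?_, fun a ha => ?_⟩
  · obtain ⟨h, hi'⟩ := hget i hi
    show l.getD (i - 1) d ∈ (s.toFinset : Set α)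
    rw [hi', mem_coe, Multiset.mem_toFinset]
    exact (Multiset.mem_sort _).mp (List.getElem_mem h)
  · obtain ⟨h, hi'⟩ := hget i hi
    obtain ⟨h', hj'⟩ := hget j hj
    simp only at hij
    rw [hi', hj', hl.getElem_inj_iff] at hij
    simp only [coe_Icc, Set.mem_Icc] at hi hj
    omega
  · obtain ⟨k, hk, rfl⟩ := List.mem_iff_getElem.mp
      (show a ∈ l from (Multiset.mem_sort _).mpr (Multiset.mem_toFinset.mp ha))
    refine ⟨k + 1, by simp only [coe_Icc, Set.mem_Icc]; omega, ?_⟩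
    exact List.getD_eq_getElem _ _ hk

theorem stmt13_general (N : ℕ)
    -- `x i` is the `i`-th smallest root of `H_N` (1-indexed, junk value otherwise)
    (x : ℕ → ℝ)
    (hx : ∀ i, x i = ((hermiteR N).roots.sort (· ≤ ·)).getD (i - 1) 0)
    (Q : ℕ → Polynomial ℝ) (hQ : IsDualHermiteFamily N Q)
    (m : ℕ) (hm : m ≤ N - 1) :
    ∀ i, 1 ≤ i → i ≤ N →
      ((m : ℝ) / 2) * (Q m).eval (x i) =
        ∑ j ∈ (Finset.Icc 1 N).erase i,
          ((Q m).eval (x i) - (Q m).eval (x j)) / (x i - x j) ^ 2 := by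
  intro i hi1 hiN
  obtain rfl : x = _ := funext hx
  set S := (hermiteR N).roots.toFinset
  have hnodup := nodup_roots_hermiteR N
  have hbij := bijOn_getD_sort hnodup (0 : ℝ)
  rw [card_roots_hermiteR] at hbij
  have horth : ∀ k < m, ∑ y ∈ S, (Q k).eval y * (Q m).eval y = 0 := fun k hk => by
    rw [sum_eq_multiset_sum, Multiset.toFinset_val, hnodup.dedup]
    exact hQ.2 k (by omega) m (by omega) hk.ne
  have heig := invSqLaplacian_eval_eq_of_orthogonal (fun a ha => sum_inv_sub_roots_hermiteR ha)
    (fun k hk => hQ.1 k (by omega)) horth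
  have hxi := hbij.mapsTo (by simp [hi1, hiN] : i ∈ (Icc 1 N : Set ℕ))
  -- both sums may include their diagonal term, which is `0 / 0 = 0`
  rw [div_mul_eq_mul_div, div_eq_inv_mul, ← mul_assoc, ← heig _ hxi, invSqLaplacian,
    sum_erase _ (by simp), sum_erase _ (by simp)]
  exact (sum_nbij _ hbij.mapsTo hbij.injOn hbij.surjOn fun j _ => rfl).symm

theorem stmt13 (N : ℕ) (hN : 1 ≤ N)
    -- `x i` is the `i`-th smallest root of `H_N` (1-indexed, junk value otherwise)
    (x : ℕ → ℝ)
    (hx : ∀ i, x i = ((hermiteR N).roots.sort (· ≤ ·)).getD (i - 1) 0)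
    (Q : ℕ → Polynomial ℝ) (hQ : IsDualHermiteFamily N Q)
    (m : ℕ) (hm : m ≤ N - 1) :
    ∀ i, 1 ≤ i → i ≤ N →
      ((m : ℝ) / 2) * (Q m).eval (x i) =
        ∑ j ∈ (Finset.Icc 1 N).erase i,
          ((Q m).eval (x i) - (Q m).eval (x j)) / (x i - x j) ^ 2 :=
  stmt13_general N x hx Q hQ m hm
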